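/- arXiv:0901.1176 — 2 statements merged into one kernel-verified Lean document; each statement's English description precedes it below -/
import Mathlib

section
/- Let u, v ≥ 1 be integers, n = u + v + 1, and let k be an integer with 1 ≤ k ≤ u. Suppose ε_0, ε_1, …, ε_{u−1} ∈ {0,1} satisfy Σ_{i=0}^{u−1} ε_i = k and Σ_{i=0}^{u−1} i·ε_i = k(k+1)/2. Define λ = (λ_1, …, λ_n) by λ_i = (u + 1 − i) + ε_{i−1} for 1 ≤ i ≤ u and λ_i = 0 for u+1 ≤ i ≤ n (so λ has v+1 trailing zeros). Then λ ∈ Λ, b(λ) = u(u+1)/2, and a(λ) = v(v+1)/2 + uv − k. -/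
noncomputable section

open Finset

private lemma sq_aux (e : ℕ → ℕ) : ∀ u : ℕ, (∀ i < u, e i ≤ 1) →
    2 * (∑ j ∈ range u, (∑ i ∈ range j, e i) * e j) + ∑ j ∈ range u, e j
      = (∑ j ∈ range u, e j) * (∑ j ∈ range u, e j) := by
  intro u
  induction u with
  | zero => simp
  | succ m ih =>
    intro he
    have h1 := ih (fun i hi => he i (by omega))
    have h2 : e m * e m = e m := by
      rcases Nat.le_one_iff_eq_zero_or_eq_one.mp (he m (by omega)) with h | h <;> rw [h]
    simp only [Finset.sum_range_succ]
    nlinarith [h1, h2]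


/-- The sequence `λ` built from the 0/1-sequence `ε` (0-indexed): for `i < u`,
`λ_i = u - i + ε_i`, and `λ_i = 0` for `u ≤ i`.  This is the paper's
`λ = (u + ε_0, u - 1 + ε_1, …, 1 + ε_{u-1}, 0, …, 0)` with `v + 1` trailing zeros,
where `n = u + v + 1`. -/
def lam (u v : ℕ) (eps : ℕ → ℕ) : Fin (u + v + 1) → ℕ :=
  fun i => if (i : ℕ) < u then u - (i : ℕ) + eps (i : ℕ) else 0

/-- `λ ∈ Λ` (it is weakly decreasing, ends in `0`, and satisfies
`λ_i ≤ n - i`), `b(λ) = u(u+1)/2`, and `a(λ) = v(v+1)/2 + uv - k`.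
Positions are 0-indexed: the paper's `λ_i` is `lam u v eps ⟨i-1,_⟩` and its
conditions `λ_i ≤ n - i` and `a(λ) = Σ (n - i - λ_i)` become
`λ_i ≤ (u+v) - i` and `a(λ) = Σ ((u+v) - i - λ_i)` here. -/
theorem lam_in_Lambda_and_ab (u v k : ℕ) (hu : 1 ≤ u) (hv : 1 ≤ v)
    (hk1 : 1 ≤ k) (hku : k ≤ u)
    (eps : ℕ → ℕ) (heps : ∀ i < u, eps i = 0 ∨ eps i = 1)
    (hsum : (∑ i ∈ Finset.range u, eps i) = k)
    (hwsum : (∑ i ∈ Finset.range u, i * eps i) = k * (k + 1) / 2) :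
    (Antitone (lam u v eps)) ∧
    (∀ i : Fin (u + v + 1), (i : ℕ) = u + v → lam u v eps i = 0) ∧
    (∀ i : Fin (u + v + 1), lam u v eps i ≤ u + v - (i : ℕ)) ∧
    ((Finset.univ.filter fun p : Fin (u + v + 1) × Fin (u + v + 1) =>
        p.1 < p.2 ∧
          ((lam u v eps p.1 : ℤ) - (lam u v eps p.2 : ℤ) + (p.1 : ℕ) - (p.2 : ℕ) = 0 ∨
           (lam u v eps p.1 : ℤ) - (lam u v eps p.2 : ℤ) + (p.1 : ℕ) - (p.2 : ℕ) = 1)).card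
      = u * (u + 1) / 2) ∧
    ((∑ i : Fin (u + v + 1), ((u + v : ℤ) - (i : ℕ) - (lam u v eps i : ℤ)))
      = ((v * (v + 1) / 2 + u * v : ℕ) : ℤ) - (k : ℤ)) := by
  have hepsle : ∀ i, i < u → eps i ≤ 1 := fun i hi => by rcases heps i hi with h | h <;> omega
  set L : ℕ → ℕ := fun m => if m < u then u - m + eps m else 0 with hL
  have hlam : ∀ i : Fin (u + v + 1), lam u v eps i = L (i : ℕ) := fun i => rfl
  refine ⟨?_, ?_, ?_, ?_, ?_⟩
  · -- Antitone
    intro i j hij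
    have hij' : (i : ℕ) ≤ (j : ℕ) := hij
    rcases Nat.eq_or_lt_of_le hij' with heq | hlt
    · rw [hlam, hlam, heq]
    · simp only [hlam, hL]
      rcases Nat.lt_or_ge (j : ℕ) u with h2 | h2
      · have e1 := hepsle _ h2
        have e2 := hepsle (i : ℕ) (by omega)
        revert hlt e1 e2 h2
        generalize (i : ℕ) = a
        generalize (j : ℕ) = b
        intro h2 e1 e2 hlt
        split_ifs <;> omega
      · revert hlt h2
        generalize (i : ℕ) = a
        generalize (j : ℕ) = b
        intro h2 hlt
        split_ifs <;> omega
  · intro i h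
    simp only [hlam, hL, h]
    rw [if_neg (by omega)]
  · intro i
    simp only [hlam, hL]
    rcases Nat.lt_or_ge (i : ℕ) u with h | h
    · have e1 := hepsle _ h
      revert e1 h
      generalize (i : ℕ) = a
      intro h e1
      rw [if_pos h]
      omega
    · revert h
      generalize (i : ℕ) = a
      intro h
      rw [if_neg (by omega)]
      omega
  · -- the b(λ) count
    set F : ℕ → ℕ → ℕ := fun a b =>
      if (a < b ∧ ((L a : ℤ) - (L b : ℤ) + (a : ℤ) - (b : ℤ) = 0 ∨
          (L a : ℤ) - (L b : ℤ) + (a : ℤ) - (b : ℤ) = 1)) then 1 else 0 with hF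
    rw [Finset.card_filter]
    have step1 : (∑ p : Fin (u + v + 1) × Fin (u + v + 1),
        if (p.1 < p.2 ∧
          ((lam u v eps p.1 : ℤ) - (lam u v eps p.2 : ℤ) + (p.1 : ℕ) - (p.2 : ℕ) = 0 ∨
           (lam u v eps p.1 : ℤ) - (lam u v eps p.2 : ℤ) + (p.1 : ℕ) - (p.2 : ℕ) = 1))
          then 1 else 0) = ∑ p : Fin (u + v + 1) × Fin (u + v + 1), F (p.1 : ℕ) (p.2 : ℕ) := by
      refine Finset.sum_congr rfl fun p _ => ?_
      simp only [hF]
      refine if_congr ?_ rfl rfl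
      rw [Fin.lt_def, hlam p.1, hlam p.2]
    rw [step1, Fintype.sum_prod_type]
    have step2 : (∑ i : Fin (u + v + 1), ∑ j : Fin (u + v + 1), F (i : ℕ) (j : ℕ))
        = ∑ i ∈ range (u + v + 1), ∑ j ∈ range (u + v + 1), F i j := by
      rw [← Fin.sum_univ_eq_sum_range (fun i => ∑ j ∈ range (u + v + 1), F i j) (u + v + 1)]
      exact Finset.sum_congr rfl fun i _ => Fin.sum_univ_eq_sum_range (F (i : ℕ)) (u + v + 1)
    rw [step2]
    have hn : u + v + 1 = u + (v + 1) := by omega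
    rw [hn, Finset.sum_range_add]
    -- tail outer block is zero
    have hzero : ∀ t ∈ range (v + 1), (∑ j ∈ range (u + (v + 1)), F (u + t) j) = 0 := by
      intro t ht
      apply Finset.sum_eq_zero
      intro j hj
      simp only [hF, hL]
      split_ifs <;> omega
    rw [Finset.sum_congr rfl hzero, Finset.sum_const_zero, add_zero]
    -- split each inner sum
    have hsplit : ∀ i ∈ range u, (∑ j ∈ range (u + (v + 1)), F i j)
        = (∑ j ∈ range u, F i j) + (∑ t ∈ range (v + 1), F i (u + t)) := by
      intro i _
      exact Finset.sum_range_add (fun j => F i j) u (v + 1)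
    rw [Finset.sum_congr rfl hsplit, Finset.sum_add_distrib]
    -- tail inner sums
    have hTail : ∀ i ∈ range u, (∑ t ∈ range (v + 1), F i (u + t)) = 1 + eps i := by
      intro i hi
      rw [mem_range] at hi
      rcases heps i hi with h | h
      · have hc : ∀ t ∈ range (v + 1), F i (u + t) = if t = 0 then 1 else 0 := by
          intro t ht
          simp only [hF, hL]
          split_ifs <;> omega
        rw [Finset.sum_congr rfl hc, Finset.sum_ite_eq' (range (v + 1)) 0 (fun _ => 1)]
        simp only [Finset.mem_range]
        rw [if_pos (by omega), h]
      · have hc : ∀ t ∈ range (v + 1), F i (u + t)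
            = (if t = 0 then 1 else 0) + (if t = 1 then 1 else 0) := by
          intro t ht
          simp only [hF, hL]
          split_ifs <;> omega
        rw [Finset.sum_congr rfl hc, Finset.sum_add_distrib,
          Finset.sum_ite_eq' (range (v + 1)) 0 (fun _ => 1),
          Finset.sum_ite_eq' (range (v + 1)) 1 (fun _ => 1)]
        rw [h]
        simp only [Finset.mem_range]
        rw [if_pos (by omega), if_pos (by omega)]
    rw [Finset.sum_congr rfl hTail, Finset.sum_add_distrib, Finset.sum_const, card_range,
      smul_eq_mul, mul_one, hsum]
    -- now the head double sum
    set A := ∑ i ∈ range u, ∑ j ∈ range u, F i j with hA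
    set B := ∑ i ∈ range u, ∑ j ∈ range u, (if i < j ∧ eps i < eps j then 1 else 0) with hB
    set G := ∑ i ∈ range u, ∑ j ∈ range u, (if i < j then 1 else 0) with hG
    set W := ∑ i ∈ range u, ∑ j ∈ range u, (if i < j then eps i * eps j else 0) with hW
    have hfilter : ∀ j, j ≤ u → filter (fun i => i < j) (range u) = range j := by
      intro j hj
      ext x
      simp only [mem_filter, mem_range]
      omega
    have hAB : A + B = G := by
      rw [hA, hB, hG, ← Finset.sum_add_distrib]
      refine Finset.sum_congr rfl fun i hi => ?_
      rw [← Finset.sum_add_distrib]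
      refine Finset.sum_congr rfl fun j hj => ?_
      rw [mem_range] at hi hj
      have e1 := hepsle i hi
      have e2 := hepsle j hj
      simp only [hF, hL]
      split_ifs <;> omega
    have hBW : B + W = k * (k + 1) / 2 := by
      rw [hB, hW, ← Finset.sum_add_distrib, ← hwsum]
      have hpt : ∀ i ∈ range u, ((∑ j ∈ range u, (if i < j ∧ eps i < eps j then 1 else 0))
          + ∑ j ∈ range u, (if i < j then eps i * eps j else 0))
          = ∑ j ∈ range u, (if i < j then eps j else 0) := by
        intro i hi
        rw [mem_range] at hi
        rw [← Finset.sum_add_distrib]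
        refine Finset.sum_congr rfl fun j hj => ?_
        rw [mem_range] at hj
        by_cases hlt : i < j
        · rcases heps i hi with h1 | h1 <;> rcases heps j hj with h2 | h2 <;>
            simp [hlt, h1, h2]
        · simp [hlt]
      rw [Finset.sum_congr rfl hpt, Finset.sum_comm]
      refine Finset.sum_congr rfl fun j hj => ?_
      rw [mem_range] at hj
      rw [← Finset.sum_filter, hfilter j hj.le, Finset.sum_const, card_range, smul_eq_mul]
    have hWv : 2 * W + k = k * k := by
      have hWval : W = ∑ j ∈ range u, (∑ i ∈ range j, eps i) * eps j := by
        rw [hW, Finset.sum_comm]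
        refine Finset.sum_congr rfl fun j hj => ?_
        rw [mem_range] at hj
        rw [← Finset.sum_filter, hfilter j hj.le, Finset.sum_mul]
      rw [hWval]
      have := sq_aux eps u hepsle
      rw [hsum] at this
      omega
    have hGv : G * 2 = u * (u - 1) := by
      have hGval : G = ∑ j ∈ range u, j := by
        rw [hG, Finset.sum_comm]
        refine Finset.sum_congr rfl fun j hj => ?_
        rw [mem_range] at hj
        rw [← Finset.sum_filter, hfilter j hj.le, Finset.sum_const, card_range, smul_eq_mul,
          mul_one]
      rw [hGval, Finset.sum_range_id_mul_two]
    have hGu : G * 2 + u = u * u := by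
      obtain ⟨w, rfl⟩ : ∃ w, u = w + 1 := ⟨u - 1, by omega⟩
      rw [hGv, Nat.add_sub_cancel]
      ring
    have hk2 : 2 * (k * (k + 1) / 2) = k * k + k := by
      have h := Nat.mul_div_cancel' (even_iff_two_dvd.mp (Nat.even_mul_succ_self k))
        (m := k * (k + 1))
      rw [h]
      ring
    have h5 : 2 * (B + W) = k * k + k := by rw [hBW]; exact hk2
    have hgoal : u * (u + 1) = u * u + u := by ring
    rw [hgoal]
    generalize hm : u * u = m at hGu ⊢
    generalize hp : k * k = p at hWv h5
    omega
  · -- the a(λ) sum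
    have key := Fin.sum_univ_eq_sum_range (fun m => ((u + v : ℤ) - m - (L m : ℤ))) (u + v + 1)
    have congr1 : (∑ i : Fin (u + v + 1), ((u + v : ℤ) - (i : ℕ) - (lam u v eps i : ℤ)))
        = ∑ i : Fin (u + v + 1), ((u + v : ℤ) - (i : ℕ) - (L (i : ℕ) : ℤ)) :=
      Finset.sum_congr rfl fun i _ => by rw [hlam]
    rw [congr1, key]
    rw [show u + v + 1 = u + (v + 1) by omega, Finset.sum_range_add]
    have hA : ∀ i ∈ range u, ((u : ℤ) + v - i - (L i : ℤ)) = (v : ℤ) - eps i := by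
      intro i hi
      rw [mem_range] at hi
      simp only [hL]
      rw [if_pos hi]
      push_cast [Nat.cast_sub hi.le]
      ring
    have hB : ∀ t ∈ range (v + 1),
        ((u : ℤ) + v - ((u + t : ℕ) : ℤ) - (L (u + t) : ℤ)) = (v : ℤ) - t := by
      intro t ht
      simp only [hL]
      rw [if_neg (by omega)]
      push_cast
      ring
    rw [Finset.sum_congr rfl hA, Finset.sum_congr rfl hB]
    have h1 : (∑ i ∈ range u, ((v : ℤ) - eps i)) = (u : ℤ) * v - k := by
      rw [Finset.sum_sub_distrib, Finset.sum_const, card_range]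
      have hc : (∑ i ∈ range u, (eps i : ℤ)) = (k : ℤ) := by
        rw [← Nat.cast_sum]
        exact_mod_cast congrArg (Nat.cast : ℕ → ℤ) hsum
      rw [hc]
      push_cast
      ring
    have h2 : (∑ t ∈ range (v + 1), ((v : ℤ) - t))
        = ((v + 1 : ℤ) * v) - ((∑ t ∈ range (v + 1), t : ℕ) : ℤ) := by
      rw [Finset.sum_sub_distrib, Finset.sum_const, card_range]
      push_cast
      ring
    have h3 : (∑ t ∈ range (v + 1), t) * 2 = (v + 1) * v := by
      rw [Finset.sum_range_id_mul_two]
      simp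
    have h4 : 2 * (v * (v + 1) / 2) = v * (v + 1) :=
      Nat.mul_div_cancel' (even_iff_two_dvd.mp (Nat.even_mul_succ_self v))
    rw [h1, h2]
    have h3' : ((∑ t ∈ range (v + 1), t : ℕ) : ℤ) * 2 = ((v : ℤ) + 1) * v := by
      exact_mod_cast congrArg (Nat.cast : ℕ → ℤ) h3
    have h4' : 2 * ((v * (v + 1) / 2 : ℕ) : ℤ) = (v : ℤ) * (v + 1) := by
      exact_mod_cast congrArg (Nat.cast : ℕ → ℤ) h4
    push_cast
    linarith [h3', h4']
end
end

section
/- Let D = (P_1, …, P_n) with P_i = (α_i, β_i) ∈ ℕ² and s_1 ≤ s_2 ≤ … ≤ s_n, and let d = Σ_i s_i. Then there exists an n×n matrix S with entries in R such that: (i) the (i,j) entry of S is 0 whenever i ≤ s_j; (ii) whenever i > s_j, the (i,j) entry of S is a product ∏_{ℓ=1}^{s_j} a_ℓ^{(i,j)}, where each factor a_ℓ^{(i,j)} is either x_i − x_ℓ or y_i − y_ℓ; and (iii) det(S) − Δ(D) ∈ I_{<d}. -/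
/-! Take `S i j = ∏_{l < s_j} (z_i - z_l)`, where `z = x` for the first `α_j` factors and `z = y`
for the remaining `β_j`. Expanding each column turns `det S` into `Δ(D)` plus a combination,
with row-independent coefficients, of determinants `Δ(E)` of total degree `< d`. Each such `Δ(E)`
is homogeneous and lies in `I`, because modulo `(x_i - x_j, y_i - y_j)` its rows `i` and `j`
coincide. -/

open MvPolynomial

noncomputable section

abbrev R (n : ℕ) := MvPolynomial (Fin n ⊕ Fin n) ℂ

/-- The variable `x_i`. -/
def xv {n : ℕ} (i : Fin n) : R n := X (Sum.inl i)

/-- The variable `y_i`. -/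
def yv {n : ℕ} (i : Fin n) : R n := X (Sum.inr i)

/-- The radical ideal defining the diagonal locus of `(ℂ²)^n`. -/
def diagIdeal (n : ℕ) : Ideal (R n) :=
  ⨅ (i : Fin n) (j : Fin n) (_ : i < j), Ideal.span {xv i - xv j, yv i - yv j}

/-- `Δ(D)`: the determinant of the matrix with `(i,j)` entry `x_i^{α_j} y_i^{β_j}`. -/
def Delta (n : ℕ) (D : Fin n → ℕ × ℕ) : R n :=
  Matrix.det (Matrix.of fun i j : Fin n => xv i ^ (D j).1 * yv i ^ (D j).2)

/-- `s_i = α_i + β_i`. -/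
def sdeg {n : ℕ} (D : Fin n → ℕ × ℕ) (i : Fin n) : ℕ := (D i).1 + (D i).2

/-- `I_{<d}`: the ideal generated by homogeneous elements of `I` of degree `< d`. -/
def Ilt (n d : ℕ) : Ideal (R n) :=
  Ideal.span {f : R n | f ∈ diagIdeal n ∧ ∃ e, e < d ∧ f.IsHomogeneous e}

/-- The bigrading weight. -/
def bw (n : ℕ) : Fin n ⊕ Fin n → ℕ × ℕ := Sum.elim (fun _ => (1, 0)) (fun _ => (0, 1))

/-- Bihomogeneous component of bidegree `(d₁, d₂)`. -/
def biComp (n d1 d2 : ℕ) : Submodule ℂ (R n) :=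
  weightedHomogeneousSubmodule ℂ (bw n) (d1, d2)

/-- Bihomogeneous elements of `I` of bidegree `(d₁,d₂)`. -/
def Vsub (n d1 d2 : ℕ) : Submodule ℂ (R n) :=
  (diagIdeal n).restrictScalars ℂ ⊓ biComp n d1 d2

/-- The ideal `(x,y)·I`. -/
def xyIdeal (n : ℕ) : Ideal (R n) :=
  Ideal.span (Set.range fun v : Fin n ⊕ Fin n => (X v : R n)) * diagIdeal n

/-- Bihomogeneous elements of `(x,y)I` of bidegree `(d₁,d₂)`. -/
def Nsub (n d1 d2 : ℕ) : Submodule ℂ (R n) :=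
  (xyIdeal n).restrictScalars ℂ ⊓ biComp n d1 d2

/-- The bigraded piece `M_{d₁,d₂}` of `M = I/(x,y)I`, realized as the image of
`Vsub` in the quotient by `Nsub`. -/
def Mgr (n d1 d2 : ℕ) : Submodule ℂ (R n ⧸ Nsub n d1 d2) :=
  (Vsub n d1 d2).map (Nsub n d1 d2).mkQ

/-- Minimal staircase form: pairwise distinct points, weakly increasing degrees,
and `s_i ∈ {i-1, i-2}` (1-indexed), i.e. `s_i ∈ {i, i-1}` 0-indexed. -/
def IsMinStaircase {n : ℕ} (D : Fin n → ℕ × ℕ) : Prop :=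
  Function.Injective D ∧ Monotone (sdeg D) ∧
    ∀ i : Fin n, sdeg D i = (i : ℕ) ∨ sdeg D i + 1 = (i : ℕ)

/-- The leader (block head) of position `j`: the largest `t ≤ j` with `s_t = t`. -/
def leader {n : ℕ} (D : Fin n → ℕ × ℕ) (j : Fin n) : ℕ :=
  (Finset.univ.filter fun t : Fin n => (t : ℕ) ≤ (j : ℕ) ∧ sdeg D t = (t : ℕ)).sup
    fun t => (t : ℕ)

/-- The partition type of `D`: the multiset of positive per-block deficits. -/
def ptype {n : ℕ} (D : Fin n → ℕ × ℕ) : Multiset ℕ :=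
  Multiset.filter (fun x => 0 < x)
    (((Finset.univ.filter fun t : Fin n => sdeg D t = (t : ℕ)).val).map
      fun t => ∑ j : Fin n, if leader D j = (t : ℕ) then (j : ℕ) - sdeg D j else 0)

/-- `μ ≤_P ν`: the parts of `μ` can be grouped so that the group sums are the parts of `ν`. -/
def subPart (μ ν : Multiset ℕ) : Prop :=
  ∃ G : Multiset (Multiset ℕ), G.sum = μ ∧ G.map Multiset.sum = ν

/-- `μ <_P ν`. -/
def subPartLt (μ ν : Multiset ℕ) : Prop := subPart μ ν ∧ μ ≠ ν

open Finset Matrix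

lemma Delta_mem_diagIdeal (n : ℕ) (E : Fin n → ℕ × ℕ) : Delta n E ∈ diagIdeal n := by
  simp only [diagIdeal, Ideal.mem_iInf]
  intro i j hij
  set J := Ideal.span ({xv i - xv j, yv i - yv j} : Set (R n))
  have hx : Ideal.Quotient.mk J (xv i) = Ideal.Quotient.mk J (xv j) :=
    Ideal.Quotient.mk_eq_mk_iff_sub_mem _ _ |>.2 <| Ideal.subset_span (by simp)
  have hy : Ideal.Quotient.mk J (yv i) = Ideal.Quotient.mk J (yv j) :=
    Ideal.Quotient.mk_eq_mk_iff_sub_mem _ _ |>.2 <| Ideal.subset_span (by simp)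
  rw [← Ideal.Quotient.eq_zero_iff_mem, Delta, RingHom.map_det]
  refine det_zero_of_row_eq hij.ne (funext fun k => ?_)
  simp [hx, hy]

lemma Delta_isHomogeneous (n : ℕ) (E : Fin n → ℕ × ℕ) :
    (Delta n E).IsHomogeneous (∑ j, sdeg E j) := by
  rw [Delta, det_apply]
  refine IsHomogeneous.sum _ _ _ fun σ _ => ?_
  have hprod : (∏ k, xv (σ k) ^ (E k).1 * yv (σ k) ^ (E k).2 : R n).IsHomogeneous
      (∑ k, sdeg E k) :=
    IsHomogeneous.prod _ _ _ fun k _ => by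
      simpa [sdeg, xv, yv] using
        ((isHomogeneous_X ℂ _).pow (E k).1).mul ((isHomogeneous_X ℂ _).pow (E k).2)
  rcases Int.units_eq_one_or (Equiv.Perm.sign σ) with h | h
  · simpa [h] using hprod
  · simpa [h] using hprod.neg

lemma Delta_mem_Ilt {n d : ℕ} {E : Fin n → ℕ × ℕ} (h : ∑ j, sdeg E j < d) :
    Delta n E ∈ Ilt n d :=
  Ideal.subset_span ⟨Delta_mem_diagIdeal n E, _, h, Delta_isHomogeneous n E⟩

lemma det_eq_sum_Delta {n : ℕ} {τ : Type*} (A : Fin n → Finset τ) (c : Fin n → τ → R n)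
    (e : Fin n → τ → ℕ × ℕ) :
    (of fun i j => ∑ t ∈ A j, c j t * (xv i ^ (e j t).1 * yv i ^ (e j t).2)).det =
      ∑ r ∈ Fintype.piFinset A, (∏ j, c j (r j)) * Delta n fun j => e j (r j) := by
  classical
  have hcols : (of fun i j => ∑ t ∈ A j, c j t * (xv i ^ (e j t).1 * yv i ^ (e j t).2))ᵀ =
      fun j => ∑ t ∈ A j, c j t • fun i => xv i ^ (e j t).1 * yv i ^ (e j t).2 := by
    ext j i
    simp [Finset.sum_apply]
  rw [← det_transpose, hcols]
  refine (detRowAlternating.toMultilinearMap.map_sum_finset _ A).trans ?_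
  refine sum_congr rfl fun r _ => ?_
  rw [MultilinearMap.map_smul_univ, smul_eq_mul, Delta, ← det_transpose]
  rfl

lemma det_sub_Delta_mem_Ilt {n : ℕ} {τ : Type*} {D : Fin n → ℕ × ℕ} (A : Fin n → Finset τ)
    (c : Fin n → τ → R n) (e : Fin n → τ → ℕ × ℕ) (t₀ : Fin n → τ) (ht₀ : ∀ j, t₀ j ∈ A j)
    (hc : ∀ j, c j (t₀ j) = 1) (he : ∀ j, e j (t₀ j) = D j)
    (hlt : ∀ j, ∀ t ∈ A j, t ≠ t₀ j → (e j t).1 + (e j t).2 < sdeg D j) :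
    (of fun i j => ∑ t ∈ A j, c j t * (xv i ^ (e j t).1 * yv i ^ (e j t).2)).det -
      Delta n D ∈ Ilt n (∑ j, sdeg D j) := by
  classical
  have hlead : (∏ j, c j (t₀ j)) * Delta n (fun j => e j (t₀ j)) = Delta n D := by
    simp [hc, he]
  rw [det_eq_sum_Delta, ← sum_erase_add _ _ (Fintype.mem_piFinset.2 ht₀), hlead,
    add_sub_cancel_right]
  refine Ideal.sum_mem _ fun r hr => Ideal.mul_mem_left _ _ (Delta_mem_Ilt ?_)
  obtain ⟨hne, hr⟩ := mem_erase.1 hr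
  obtain ⟨j₀, hj₀⟩ := Function.ne_iff.1 hne
  have hle : ∀ j, sdeg (fun j => e j (r j)) j ≤ sdeg D j := fun j => by
    by_cases hj : r j = t₀ j
    · simp [sdeg, hj, he]
    · exact (hlt j _ (Fintype.mem_piFinset.1 hr j) hj).le
  exact sum_lt_sum (fun j _ => hle j) ⟨j₀, mem_univ _, hlt j₀ _ (Fintype.mem_piFinset.1 hr j₀) hj₀⟩

lemma prod_ite_sub_eq_sum_powerset {ι S : Type*} [CommRing S] [DecidableEq ι] (L : Finset ι)
    (P : ι → Prop) [DecidablePred P] (a b : S) (v : ι → S) :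
    ∏ l ∈ L, ((if P l then a else b) - v l) =
      ∑ T ∈ L.powerset, (∏ l ∈ L \ T, -v l) * (a ^ #{l ∈ T | P l} * b ^ #{l ∈ T | ¬P l}) := by
  simp_rw [sub_eq_add_neg]
  rw [prod_add]
  refine sum_congr rfl fun T _ => ?_
  rw [prod_ite, prod_const, prod_const, mul_comm]

lemma prod_fin_ite_lt_eq_prod_range {M : Type*} [CommMonoid M] {n s : ℕ} (hs : s ≤ n)
    (f : ℕ → M) : ∏ l : Fin n, (if (l : ℕ) < s then f l else 1) = ∏ l ∈ range s, f l := by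
  rw [Fin.prod_univ_eq_prod_range (fun l => if l < s then f l else 1), ← prod_filter]
  congr 1
  ext l
  simp only [mem_filter, mem_range]
  omega

lemma card_filter_lt_range_add (a b : ℕ) :
    (#{l ∈ range (a + b) | l < a}, #{l ∈ range (a + b) | ¬l < a}) = (a, b) := by
  have hlt : {l ∈ range (a + b) | l < a} = range a := by
    ext l
    simp only [mem_filter, mem_range]
    omega
  have hcard := card_filter_add_card_filter_not (s := range (a + b)) (· < a)
  rw [hlt, card_range, card_range] at hcard
  rw [hlt, card_range]
  congr 1
  omega

/-- Positions are 0-indexed: the paper's condition "`S i j = 0` whenever `i ≤ s_j`" (1-indexed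
rows) becomes `(i : ℕ) < s_j`, and the factors `x_i - x_ℓ`, `y_i - y_ℓ` for `1 ≤ ℓ ≤ s_j` are
indexed by `ℓ : Fin n` with `(ℓ : ℕ) < s_j`. -/
theorem exists_staircase_form_general (n : ℕ) (D : Fin n → ℕ × ℕ) :
    ∃ S : Matrix (Fin n) (Fin n) (R n),
      (∀ i j : Fin n, (i : ℕ) < sdeg D j → S i j = 0) ∧
      (∀ i j : Fin n, sdeg D j ≤ (i : ℕ) → ∃ c : Fin n → Bool,
        S i j = ∏ l : Fin n, if (l : ℕ) < sdeg D j then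
          (if c l then xv i - xv l else yv i - yv l) else 1) ∧
      S.det - Delta n D ∈ Ilt n (∑ i, sdeg D i) := by
  classical
  obtain rfl | hn := Nat.eq_zero_or_pos n
  · exact ⟨0, finZeroElim, finZeroElim, by simp [Delta]⟩
  -- Only columns with `s_j > n` use factors with `l ≥ n`; such columns vanish, so any index works.
  let p : ℕ → Fin n := fun l => ⟨l % n, Nat.mod_lt l hn⟩
  have hp : ∀ l : Fin n, p l = l := fun l => Fin.ext (Nat.mod_eq_of_lt l.isLt)
  let v : Fin n → ℕ → R n := fun j l => if l < (D j).1 then xv (p l) else yv (p l)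
  let S : Matrix (Fin n) (Fin n) (R n) := of fun i j =>
    ∏ l ∈ range (sdeg D j), ((if l < (D j).1 then xv i else yv i) - v j l)
  refine ⟨S, fun i j hij => prod_eq_zero (mem_range.2 hij) ?_, fun i j hij => ?_, ?_⟩
  · simp only [v, hp]
    split_ifs <;> exact sub_self _
  · refine ⟨fun l => decide ((l : ℕ) < (D j).1), ?_⟩
    rw [show S i j = _ from of_apply _ i j, ← prod_fin_ite_lt_eq_prod_range (hij.trans i.isLt.le)]
    refine prod_congr rfl fun l _ => ?_
    simp only [v, hp, decide_eq_true_eq]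
    split_ifs <;> rfl
  · let e : Fin n → Finset ℕ → ℕ × ℕ := fun j T =>
      (#{l ∈ T | l < (D j).1}, #{l ∈ T | ¬l < (D j).1})
    have hS : S = of fun i j => ∑ T ∈ (range (sdeg D j)).powerset,
        (∏ l ∈ range (sdeg D j) \ T, -v j l) * (xv i ^ (e j T).1 * yv i ^ (e j T).2) :=
      congrArg of <| funext₂ fun i j => prod_ite_sub_eq_sum_powerset _ _ _ _ _
    rw [hS]
    refine det_sub_Delta_mem_Ilt _ _ e (fun j => range (sdeg D j)) (fun j => mem_powerset_self _)
      (fun j => by simp) (fun j => card_filter_lt_range_add _ _) fun j T hT hne => ?_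
    rw [card_filter_add_card_filter_not, ← card_range (sdeg D j)]
    exact card_lt_card ((mem_powerset.1 hT).ssubset_of_ne hne)

/-- existence of a staircase form. Positions are 0-indexed: the
paper's condition "`S i j = 0` whenever `i ≤ s_j`" (1-indexed rows) becomes
`(i : ℕ) < s_j`, and the factors `x_i - x_ℓ`, `y_i - y_ℓ` for `1 ≤ ℓ ≤ s_j`
are indexed by `ℓ : Fin n` with `(ℓ : ℕ) < s_j`. -/
theorem exists_staircase_form (n : ℕ) (D : Fin n → ℕ × ℕ)
    (hmono : Monotone (sdeg D)) :
    ∃ S : Matrix (Fin n) (Fin n) (R n),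
      (∀ i j : Fin n, (i : ℕ) < sdeg D j → S i j = 0) ∧
      (∀ i j : Fin n, sdeg D j ≤ (i : ℕ) → ∃ c : Fin n → Bool,
        S i j = ∏ l : Fin n, if (l : ℕ) < sdeg D j then
          (if c l then xv i - xv l else yv i - yv l) else 1) ∧
      S.det - Delta n D ∈ Ilt n (∑ i, sdeg D i) :=
  exists_staircase_form_general n D
end
end
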